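/- arXiv:math/0701781 — 2 statements merged into one kernel-verified Lean document; each statement's English description precedes it below -/
import Mathlib

section
/- Let x₁,…,xₙ be i.i.d. uniform on [0,1]^d, Γ ⊂ ℤ^d with |Γ| = D ≥ 2, and U the associated random Fourier matrix with entries exp(2πi k·x_t). Then for every ε > 0, P(‖n⁻¹U*U − I‖ ≥ ε) ≤ 4D(D−1) exp(−nε²/(2((D−1)² + √2 (D−1)ε/3))). -/
/-!
Off the diagonal, the entry `(j, l)` of `n⁻¹ U* U - I` is the empirical mean of the plane wave
`e_m(v) = exp (2πi m·v)`, `m = k_l - k_j ≠ 0`, over the sample; the diagonal vanishes. By the Schur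
test, `‖n⁻¹ U* U - I‖ ≤ (D - 1) |entry|` for the largest off-diagonal entry, and a complex number
`z` satisfies `|z| / √2 ≤ Re (c z)` for one of the four rotations `c ∈ {1, i, -1, -i}`. This covers
the event by `4 D (D - 1)` events `{n s ≤ ∑ₜ Re (c e_m(xₜ))}` with `s = ε / (√2 (D - 1))`. Under the
uniform law on `[0,1]^d`, `Re (c e_m)` is bounded by `1`, has mean `0` and mean square `1 / 2`,
since `e_m² = e_{2m}` also integrates to `0`; so Bernstein's inequality bounds each event by
`exp (-n s² / (2 (1 / 2 + s / 3)))`, which is the claimed exponent.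
-/

open MeasureTheory ProbabilityTheory Matrix
open scoped Real Matrix.Norms.L2Operator Nat

lemma Real.exp_sub_sub_one_eq_tsum (x : ℝ) :
    Real.exp x - x - 1 = ∑' k : ℕ, x ^ (k + 2) / (k + 2)! := by
  have h := (Real.summable_pow_div_factorial x).sum_add_tsum_nat_add 2
  rw [← congrFun NormedSpace.exp_eq_tsum_div x, ← Real.exp_eq_exp_ℝ] at h
  have h01 : ∑ k ∈ Finset.range 2, x ^ k / k ! = 1 + x := by norm_num [Finset.sum_range_succ]
  linarith

lemma Real.exp_mul_le_of_abs_le_one {l y : ℝ} (hl : 0 ≤ l) (hy : |y| ≤ 1) :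
    Real.exp (l * y) ≤ 1 + l * y + y ^ 2 * (Real.exp l - l - 1) := by
  have hterm (k : ℕ) : (l * y) ^ (k + 2) / (k + 2)! ≤ y ^ 2 * (l ^ (k + 2) / (k + 2)!) := by
    rw [mul_div_assoc']
    gcongr
    calc (l * y) ^ (k + 2) ≤ l ^ (k + 2) * |y| ^ (k + 2) := by
          rw [mul_pow, ← abs_pow]; exact mul_le_mul_of_nonneg_left (le_abs_self _) (by positivity)
      _ ≤ l ^ (k + 2) * |y| ^ 2 :=
          mul_le_mul_of_nonneg_left (pow_le_pow_of_le_one (abs_nonneg y) hy (by omega))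
            (by positivity)
      _ = y ^ 2 * l ^ (k + 2) := by rw [sq_abs, mul_comm]
  have hsum := Summable.tsum_le_tsum hterm
    ((summable_nat_add_iff 2).2 (Real.summable_pow_div_factorial (l * y)))
    (((summable_nat_add_iff 2).2 (Real.summable_pow_div_factorial l)).mul_left _)
  rw [tsum_mul_left, ← Real.exp_sub_sub_one_eq_tsum, ← Real.exp_sub_sub_one_eq_tsum] at hsum
  linarith

lemma Nat.two_mul_three_pow_le_factorial_add_two (k : ℕ) : 2 * 3 ^ k ≤ (k + 2)! := by
  induction k with
  | zero => decide
  | succ k ih =>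
    rw [Nat.factorial_succ, pow_succ]
    nlinarith

lemma Real.two_mul_one_sub_div_three_mul_exp_sub_sub_one_le {l : ℝ} (hl : 0 ≤ l) :
    2 * (1 - l / 3) * (Real.exp l - l - 1) ≤ l ^ 2 := by
  have hexp : 0 ≤ Real.exp l - l - 1 := by linarith [Real.add_one_le_exp l]
  rcases le_or_gt 3 l with h3 | h3
  · nlinarith
  have hr0 : 0 ≤ l / 3 := by positivity
  have hr1 : l / 3 < 1 := by linarith
  have hterm (k : ℕ) : l ^ (k + 2) / (k + 2)! ≤ l ^ 2 / 2 * (l / 3) ^ k := by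
    calc l ^ (k + 2) / (k + 2)! ≤ l ^ (k + 2) / (2 * 3 ^ k) := by
          gcongr; exact_mod_cast Nat.two_mul_three_pow_le_factorial_add_two k
      _ = l ^ 2 / 2 * (l / 3) ^ k := by rw [div_pow]; ring
  have hsum : Real.exp l - l - 1 ≤ l ^ 2 / 2 * (1 - l / 3)⁻¹ := by
    rw [Real.exp_sub_sub_one_eq_tsum, ← tsum_geometric_of_lt_one hr0 hr1, ← tsum_mul_left]
    exact Summable.tsum_le_tsum hterm
      ((summable_nat_add_iff 2).2 (Real.summable_pow_div_factorial l))
      ((summable_geometric_of_lt_one hr0 hr1).mul_left _)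
  have hpos : 0 < 1 - l / 3 := by linarith
  calc 2 * (1 - l / 3) * (Real.exp l - l - 1)
      ≤ 2 * (1 - l / 3) * (l ^ 2 / 2 * (1 - l / 3)⁻¹) := by gcongr
    _ = l ^ 2 := by field_simp

-- Bernstein's choice `l = s / (v + s / 3)` of the Chernoff parameter.
lemma Real.neg_mul_add_mul_exp_sub_sub_one_le {v s : ℝ} (hv : 0 ≤ v) (hs : 0 < s) :
    -(s / (v + s / 3)) * s + v * (Real.exp (s / (v + s / 3)) - s / (v + s / 3) - 1) ≤
      -s ^ 2 / (2 * (v + s / 3)) := by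
  set A := v + s / 3
  set l := s / A
  have hA : 0 < A := by positivity
  have hlA : l * A = s := div_mul_cancel₀ s hA.ne'
  have hvA : (1 - l / 3) * A = v := by
    rw [sub_mul, one_mul, div_mul_eq_mul_div, hlA]; ring
  have key : 2 * v * (Real.exp l - l - 1) * A ≤ s ^ 2 :=
    calc 2 * v * (Real.exp l - l - 1) * A = 2 * (1 - l / 3) * (Real.exp l - l - 1) * A ^ 2 := by
          rw [← hvA]; ring
      _ ≤ l ^ 2 * A ^ 2 := by
          gcongr; exact Real.two_mul_one_sub_div_three_mul_exp_sub_sub_one_le (by positivity)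
      _ = s ^ 2 := by rw [← hlA]; ring
  rw [le_div_iff₀ (by positivity)]
  linear_combination key - 2 * s * hlA

namespace ProbabilityTheory

variable {Ω : Type*} [MeasurableSpace Ω] {μ : Measure Ω} [IsProbabilityMeasure μ]

lemma mgf_le_exp_of_abs_le_one {Y : Ω → ℝ} (hY : AEMeasurable Y μ) (hY1 : ∀ ω, |Y ω| ≤ 1)
    (hmean : ∫ ω, Y ω ∂μ = 0) {v : ℝ} (hvar : ∫ ω, Y ω ^ 2 ∂μ ≤ v) {l : ℝ} (hl : 0 ≤ l) :
    mgf Y μ l ≤ Real.exp (v * (Real.exp l - l - 1)) := by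
  set C := Real.exp l - l - 1
  have hC : 0 ≤ C := by linarith [Real.add_one_le_exp l]
  have hY_int : Integrable Y μ :=
    .of_bound hY.aestronglyMeasurable 1 (.of_forall fun ω => hY1 ω)
  have hY2_int : Integrable (fun ω => Y ω ^ 2) μ :=
    .of_bound (hY.pow_const 2).aestronglyMeasurable 1 (.of_forall fun ω => by
      rw [Real.norm_eq_abs, abs_pow]; exact pow_le_one₀ (abs_nonneg _) (hY1 ω))
  have hexp_int : Integrable (fun ω => Real.exp (l * Y ω)) μ :=
    .of_bound (hY.const_mul l).exp.aestronglyMeasurable (Real.exp l) (.of_forall fun ω => by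
      rw [Real.norm_eq_abs, Real.abs_exp, Real.exp_le_exp]
      nlinarith [(abs_le.1 (hY1 ω)).2])
  have hlin_int : Integrable (fun ω => 1 + l * Y ω) μ :=
    (integrable_const 1).add (hY_int.const_mul l)
  calc mgf Y μ l ≤ ∫ ω, (1 + l * Y ω + Y ω ^ 2 * C) ∂μ :=
        integral_mono hexp_int (hlin_int.add (hY2_int.mul_const C)) fun ω => by
            simpa [mul_comm] using Real.exp_mul_le_of_abs_le_one hl (hY1 ω)
    _ = 1 + (∫ ω, Y ω ^ 2 ∂μ) * C := by
        rw [integral_add hlin_int (hY2_int.mul_const C),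
          integral_add (integrable_const 1) (hY_int.const_mul l), integral_const_mul,
          integral_mul_const, hmean]
        simp
    _ ≤ 1 + v * C := by gcongr
    _ ≤ Real.exp (v * C) := by linarith [Real.add_one_le_exp (v * C)]

lemma measure_sum_ge_le_of_iIndepFun_of_abs_le_one {ι : Type*} [Fintype ι] {Y : ι → Ω → ℝ}
    (hindep : iIndepFun Y μ) (hY : ∀ i, AEMeasurable (Y i) μ) (hY1 : ∀ i ω, |Y i ω| ≤ 1)
    (hmean : ∀ i, ∫ ω, Y i ω ∂μ = 0) {v : ℝ} (hv : 0 ≤ v) (hvar : ∀ i, ∫ ω, Y i ω ^ 2 ∂μ ≤ v)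
    {s : ℝ} (hs : 0 < s) :
    μ {ω | Fintype.card ι * s ≤ ∑ i, Y i ω} ≤
      ENNReal.ofReal (Real.exp (-(Fintype.card ι * s ^ 2) / (2 * (v + s / 3)))) := by
  set n : ℝ := (Fintype.card ι : ℝ)
  set l := s / (v + s / 3)
  have hl : 0 ≤ l := by positivity
  have hsum_le (ω : Ω) : (∑ i, Y i) ω ≤ n := by
    calc (∑ i, Y i) ω = ∑ i, Y i ω := Finset.sum_apply ω _ _
      _ ≤ ∑ _i : ι, (1 : ℝ) := Finset.sum_le_sum fun i _ => (abs_le.1 (hY1 i ω)).2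
      _ = n := by simp [n]
  have hexp_int : Integrable (fun ω => Real.exp (l * (∑ i, Y i) ω)) μ :=
    .of_bound ((Finset.aemeasurable_sum _ fun i _ => hY i).const_mul l).exp.aestronglyMeasurable
      (Real.exp (l * n)) (.of_forall fun ω => by
        rw [Real.norm_eq_abs, Real.abs_exp, Real.exp_le_exp]
        exact mul_le_mul_of_nonneg_left (hsum_le ω) hl)
  have hmgf : mgf (∑ i, Y i) μ l ≤ Real.exp (n * (v * (Real.exp l - l - 1))) := by
    calc mgf (∑ i, Y i) μ l = ∏ i, mgf (Y i) μ l := hindep.mgf_sum₀ hY _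
      _ ≤ ∏ _i : ι, Real.exp (v * (Real.exp l - l - 1)) := Finset.prod_le_prod
          (fun i _ => mgf_nonneg) fun i _ => mgf_le_exp_of_abs_le_one (hY i) (hY1 i) (hmean i)
            (hvar i) hl
      _ = Real.exp (n * (v * (Real.exp l - l - 1))) := by
          rw [Finset.prod_const, Finset.card_univ, ← Real.exp_nat_mul]
  rw [← ofReal_measureReal]
  refine ENNReal.ofReal_le_ofReal ?_
  calc μ.real {ω | n * s ≤ ∑ i, Y i ω} = μ.real {ω | n * s ≤ (∑ i, Y i) ω} := by
        simp only [Finset.sum_apply]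
    _ ≤ Real.exp (-l * (n * s)) * mgf (∑ i, Y i) μ l := measure_ge_le_exp_mul_mgf _ hl hexp_int
    _ ≤ Real.exp (-l * (n * s)) * Real.exp (n * (v * (Real.exp l - l - 1))) := by gcongr
    _ = Real.exp (n * (-l * s + v * (Real.exp l - l - 1))) := by rw [← Real.exp_add]; ring_nf
    _ ≤ Real.exp (n * (-s ^ 2 / (2 * (v + s / 3)))) := by
        gcongr; exact Real.neg_mul_add_mul_exp_sub_sub_one_le hv hs
    _ = Real.exp (-(n * s ^ 2) / (2 * (v + s / 3))) := by ring_nf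

lemma measure_sum_comp_ge_le_of_iIndepFun_of_abs_le_one {ι E : Type*} [Fintype ι]
    [MeasurableSpace E] {ν : Measure E} {X : ι → Ω → E} (hindep : iIndepFun X μ)
    (hX : ∀ i, AEMeasurable (X i) μ) (hlaw : ∀ i, μ.map (X i) = ν) {g : E → ℝ}
    (hg : Measurable g) (hg1 : ∀ y, |g y| ≤ 1) (hmean : ∫ y, g y ∂ν = 0) {v : ℝ} (hv : 0 ≤ v)
    (hvar : ∫ y, g y ^ 2 ∂ν ≤ v) {s : ℝ} (hs : 0 < s) :
    μ {ω | Fintype.card ι * s ≤ ∑ i, g (X i ω)} ≤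
      ENNReal.ofReal (Real.exp (-(Fintype.card ι * s ^ 2) / (2 * (v + s / 3)))) := by
  have hcomp {f : E → ℝ} (hf : Measurable f) (i : ι) : ∫ ω, f (X i ω) ∂μ = ∫ y, f y ∂ν := by
    rw [← hlaw i, integral_map (hX i) hf.aestronglyMeasurable]
  exact measure_sum_ge_le_of_iIndepFun_of_abs_le_one (hindep.comp (fun _ => g) fun _ => hg)
    (fun i => hg.comp_aemeasurable (hX i)) (fun i ω => hg1 _)
    (fun i => (hcomp hg i).trans hmean) hv
    (fun i => (hcomp (hg.pow_const 2) i).trans_le hvar) hs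

end ProbabilityTheory

section PlaneWave

open Complex

variable {ι : Type*} [Fintype ι]

-- Written as the entries of `U` in the theorem, so that its hypothesis `hU` reads
-- `U ω t j = planeWave (k j) (x t ω)` definitionally.
noncomputable def planeWave (m : ι → ℤ) (v : ι → ℝ) : ℂ :=
  exp (2 * π * I * ∑ i, (m i : ℂ) * (v i : ℂ))

lemma planeWave_eq_prod (m : ι → ℤ) (v : ι → ℝ) :
    planeWave m v = ∏ i, exp (2 * π * I * m i * v i) := by
  rw [planeWave, Finset.mul_sum, exp_sum]
  simp only [mul_assoc]

@[simp]
lemma planeWave_zero (v : ι → ℝ) : planeWave 0 v = 1 := by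
  simp [planeWave]

lemma planeWave_add (m m' : ι → ℤ) (v : ι → ℝ) :
    planeWave (m + m') v = planeWave m v * planeWave m' v := by
  simp only [planeWave, ← exp_add, ← mul_add, ← Finset.sum_add_distrib, Pi.add_apply,
    Int.cast_add, add_mul]

lemma star_planeWave (m : ι → ℤ) (v : ι → ℝ) : star (planeWave m v) = planeWave (-m) v := by
  rw [planeWave, planeWave, star_def, ← exp_conj]
  simp [map_sum, Finset.mul_sum, map_ofNat]

@[simp]
lemma norm_planeWave (m : ι → ℤ) (v : ι → ℝ) : ‖planeWave m v‖ = 1 := by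
  rw [planeWave, norm_exp]
  simp

@[fun_prop]
lemma continuous_planeWave (m : ι → ℤ) : Continuous (planeWave m) := by
  unfold planeWave; fun_prop

lemma integral_exp_two_pi_I_int_mul {m : ℤ} (hm : m ≠ 0) :
    ∫ t in Set.Icc (0 : ℝ) 1, exp (2 * π * I * m * t) = 0 := by
  have hc : 2 * π * I * m ≠ 0 := by simp [hm, Real.pi_ne_zero]
  rw [integral_Icc_eq_integral_Ioc, ← intervalIntegral.integral_of_le zero_le_one,
    integral_exp_mul_complex hc]
  simp [mul_comm _ (m : ℂ), exp_int_mul_two_pi_mul_I]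

lemma integral_planeWave_unitCube {m : ι → ℤ} (hm : m ≠ 0) :
    ∫ v in Set.Icc (0 : ι → ℝ) 1, planeWave m v = 0 := by
  obtain ⟨i, hi⟩ := Function.ne_iff.1 hm
  rw [← Set.pi_univ_Icc, volume_pi, Measure.restrict_pi_pi]
  simp_rw [planeWave_eq_prod, Pi.zero_apply, Pi.one_apply]
  rw [integral_fintype_prod_eq_prod (fun (i : ι) (t : ℝ) => exp (2 * π * I * m i * t))]
  exact Finset.prod_eq_zero (Finset.mem_univ i) (integral_exp_two_pi_I_int_mul hi)

lemma integral_re_mul_planeWave {m : ι → ℤ} (hm : m ≠ 0) (c : ℂ) :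
    ∫ v in Set.Icc (0 : ι → ℝ) 1, (c * planeWave m v).re = 0 := by
  have hint : IntegrableOn (fun v => c * planeWave m v) (Set.Icc 0 1) :=
    (by fun_prop : Continuous fun v => c * planeWave m v).integrableOn_Icc
  simpa [integral_const_mul, integral_planeWave_unitCube hm] using integral_re hint

lemma integral_re_mul_planeWave_sq {m : ι → ℤ} (hm : m ≠ 0) {c : ℂ} (hc : ‖c‖ = 1) :
    ∫ v in Set.Icc (0 : ι → ℝ) 1, (c * planeWave m v).re ^ 2 = 1 / 2 := by
  have hm2 : m + m ≠ 0 := fun h => hm <| funext fun i => by simpa using congrFun h i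
  have hsq (v : ι → ℝ) :
      (c * planeWave m v).re ^ 2 = (1 + (c ^ 2 * planeWave (m + m) v).re) / 2 := by
    have hz : ‖c * planeWave m v‖ ^ 2 = 1 := by simp [hc]
    rw [planeWave_add, show c ^ 2 * (planeWave m v * planeWave m v) = (c * planeWave m v) ^ 2 by
      ring]
    generalize c * planeWave m v = z at hz ⊢
    rw [Complex.sq_norm, normSq_apply] at hz
    rw [sq z, mul_re]
    linear_combination hz / 2
  have hint : IntegrableOn (fun v => (c ^ 2 * planeWave (m + m) v).re) (Set.Icc 0 1) :=
    (by fun_prop : Continuous fun v => (c ^ 2 * planeWave (m + m) v).re).integrableOn_Icc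
  simp_rw [hsq]
  rw [integral_div, integral_add continuous_const.integrableOn_Icc hint,
    integral_re_mul_planeWave hm2, setIntegral_const]
  simp [measureReal_def, Real.volume_Icc_pi]

end PlaneWave

lemma measure_sum_re_mul_planeWave_ge_le {Ω ι σ : Type*} [MeasurableSpace Ω] {μ : Measure Ω}
    [IsProbabilityMeasure μ] [Fintype ι] [Fintype σ] {X : ι → Ω → σ → ℝ}
    (hindep : iIndepFun X μ) (hX : ∀ t, AEMeasurable (X t) μ)
    (hunif : ∀ t, μ.map (X t) = (volume : Measure (σ → ℝ)).restrict (Set.Icc 0 1))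
    {m : σ → ℤ} (hm : m ≠ 0) {c : ℂ} (hc : ‖c‖ = 1) {s : ℝ} (hs : 0 < s) :
    μ {ω | Fintype.card ι * s ≤ ∑ t, (c * planeWave m (X t ω)).re} ≤
      ENNReal.ofReal (Real.exp (-(Fintype.card ι * s ^ 2) / (2 * (1 / 2 + s / 3)))) :=
  measure_sum_comp_ge_le_of_iIndepFun_of_abs_le_one hindep hX hunif (by fun_prop)
    (fun v => (Complex.abs_re_le_norm _).trans (by simp [hc])) (integral_re_mul_planeWave hm c)
    (by norm_num) (integral_re_mul_planeWave_sq hm hc).le hs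

lemma Fintype.sum_le_card_sub_one_mul {n : Type*} [Fintype n] [DecidableEq n] {b : n → ℝ} {i : n}
    {c : ℝ} (hi : b i = 0) (hb : ∀ j, j ≠ i → b j ≤ c) :
    ∑ j, b j ≤ (Fintype.card n - 1) * c := by
  rw [← Finset.sum_erase_add _ _ (Finset.mem_univ i), hi, add_zero]
  calc ∑ j ∈ Finset.univ.erase i, b j ≤ (Finset.univ.erase i).card • c :=
        Finset.sum_le_card_nsmul _ _ _ fun j hj => hb j (Finset.ne_of_mem_erase hj)
    _ = (Fintype.card n - 1) * c := by
        rw [Finset.card_erase_of_mem (Finset.mem_univ i), nsmul_eq_mul, Finset.card_univ,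
          Nat.cast_pred (Fintype.card_pos_iff.2 ⟨i⟩)]

namespace Matrix

variable {m n 𝕜 : Type*} [Fintype m] [Fintype n] [DecidableEq n] [RCLike 𝕜]

lemma l2_opNorm_le_of_sum_norm_le (A : Matrix m n 𝕜) {K : ℝ} (hK : 0 ≤ K)
    (hrow : ∀ i, ∑ j, ‖A i j‖ ≤ K) (hcol : ∀ j, ∑ i, ‖A i j‖ ≤ K) : ‖A‖ ≤ K := by
  rw [l2_opNorm_def]
  refine ContinuousLinearMap.opNorm_le_bound _ hK fun x => ?_
  refine le_of_pow_le_pow_left₀ two_ne_zero (by positivity) ?_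
  have hrow_sq (i : m) : ‖∑ j, A i j * x j‖ ^ 2 ≤ K * ∑ j, ‖A i j‖ * ‖x j‖ ^ 2 :=
    calc ‖∑ j, A i j * x j‖ ^ 2 ≤ (∑ j, ‖A i j‖ * ‖x j‖) ^ 2 := by
          gcongr; exact (norm_sum_le _ _).trans_eq (by simp only [norm_mul])
      _ ≤ (∑ j, ‖A i j‖) * ∑ j, ‖A i j‖ * ‖x j‖ ^ 2 :=
          Finset.sum_sq_le_sum_mul_sum_of_sq_le_mul _ (fun _ _ => norm_nonneg _)
            (fun _ _ => by positivity) fun _ _ => le_of_eq (by ring)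
      _ ≤ K * ∑ j, ‖A i j‖ * ‖x j‖ ^ 2 := by gcongr; exact hrow i
  calc ‖(toEuclideanLin.trans LinearMap.toContinuousLinearMap A) x‖ ^ 2
      = ∑ i, ‖∑ j, A i j * x j‖ ^ 2 := by
        simp [EuclideanSpace.norm_sq_eq, toLpLin_apply, mulVec, dotProduct]
    _ ≤ ∑ i, K * ∑ j, ‖A i j‖ * ‖x j‖ ^ 2 := Finset.sum_le_sum fun i _ => hrow_sq i
    _ = K * ∑ j, (∑ i, ‖A i j‖) * ‖x j‖ ^ 2 := by
        simp_rw [← Finset.mul_sum, Finset.sum_mul]; rw [Finset.sum_comm]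
    _ ≤ K * ∑ j, K * ‖x j‖ ^ 2 := by gcongr with j; exact hcol j
    _ = (K * ‖x‖) ^ 2 := by rw [mul_pow, EuclideanSpace.norm_sq_eq, ← Finset.mul_sum]; ring

lemma exists_ne_l2_opNorm_le_mul_norm_apply [Nontrivial n] (A : Matrix n n 𝕜)
    (hA : ∀ i, A i i = 0) :
    ∃ i j, i ≠ j ∧ ‖A‖ ≤ (Fintype.card n - 1) * ‖A i j‖ := by
  obtain ⟨a, b, hab⟩ := exists_pair_ne n
  obtain ⟨⟨i, j⟩, hij, hmax⟩ := (Finset.univ.offDiag : Finset (n × n)).exists_max_image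
    (fun p => ‖A p.1 p.2‖) ⟨(a, b), by simpa using hab⟩
  have hle (k l : n) (hkl : k ≠ l) : ‖A k l‖ ≤ ‖A i j‖ := hmax (k, l) (by simpa using hkl)
  refine ⟨i, j, by simpa using hij, l2_opNorm_le_of_sum_norm_le A ?_ ?_ ?_⟩
  · exact mul_nonneg (sub_nonneg.2 (Nat.one_le_cast.2 Fintype.card_pos)) (norm_nonneg _)
  · exact fun k => Fintype.sum_le_card_sub_one_mul (by simp [hA]) fun l hl => hle k l hl.symm
  · exact fun l => Fintype.sum_le_card_sub_one_mul (by simp [hA]) fun k hk => hle k l hk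

end Matrix

lemma Complex.exists_norm_div_sqrt_two_le_re_I_pow_mul (z : ℂ) :
    ∃ r : Fin 4, ‖z‖ / √2 ≤ (I ^ (r : ℕ) * z).re := by
  by_contra! h
  have h0 : z.re < ‖z‖ / √2 := by simpa using h 0
  have h1 : -z.im < ‖z‖ / √2 := by simpa using h 1
  have h2 : -z.re < ‖z‖ / √2 := by simpa [pow_succ] using h 2
  have h3 : z.im < ‖z‖ / √2 := by simpa [pow_succ] using h 3
  have hz : z.re ^ 2 + z.im ^ 2 = ‖z‖ ^ 2 := by rw [Complex.sq_norm, normSq_apply]; ring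
  have ht : (‖z‖ / √2) ^ 2 = ‖z‖ ^ 2 / 2 := by rw [div_pow, Real.sq_sqrt zero_le_two]
  nlinarith

section FourierMatrix

open Complex

variable {ι κ σ : Type*} [Fintype ι] [Fintype σ] {U : Matrix ι κ ℂ} {k : κ → σ → ℤ}
  {y : ι → σ → ℝ}

lemma conjTranspose_mul_self_apply_of_planeWave (hU : ∀ t j, U t j = planeWave (k j) (y t))
    (j l : κ) : (Uᴴ * U) j l = ∑ t, planeWave (k l - k j) (y t) := by
  simp only [mul_apply, conjTranspose_apply, hU, star_planeWave, ← planeWave_add,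
    neg_add_eq_sub]

lemma exists_le_sum_re_planeWave_of_le_l2_opNorm [Nonempty ι] [Fintype κ] [DecidableEq κ]
    [Nontrivial κ] (hU : ∀ t j, U t j = planeWave (k j) (y t)) {ε : ℝ}
    (hε : ε ≤ ‖(Fintype.card ι : ℂ)⁻¹ • (Uᴴ * U) - 1‖) :
    ∃ j l, j ≠ l ∧ ∃ r : Fin 4, Fintype.card ι * (ε / (√2 * (Fintype.card κ - 1))) ≤
      ∑ t, (I ^ (r : ℕ) * planeWave (k l - k j) (y t)).re := by
  set n : ℝ := (Fintype.card ι : ℝ)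
  set M := (Fintype.card ι : ℂ)⁻¹ • (Uᴴ * U) - 1
  have hn : 0 < n := Nat.cast_pos.2 Fintype.card_pos
  have hM (j l : κ) :
      M j l = (n : ℂ)⁻¹ * ∑ t, planeWave (k l - k j) (y t) - (1 : Matrix κ κ ℂ) j l := by
    simp [M, n, conjTranspose_mul_self_apply_of_planeWave hU]
  have hdiag (j : κ) : M j j = 0 := by
    simp [hM, n]
  obtain ⟨j, l, hjl, hnorm⟩ := exists_ne_l2_opNorm_le_mul_norm_apply M hdiag
  obtain ⟨r, hr⟩ := Complex.exists_norm_div_sqrt_two_le_re_I_pow_mul (M j l)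
  refine ⟨j, l, hjl, r, ?_⟩
  have hD : 0 < (Fintype.card κ : ℝ) - 1 := by
    have := Fintype.one_lt_card (α := κ); rw [sub_pos]; exact_mod_cast this
  calc n * (ε / (√2 * (Fintype.card κ - 1))) ≤ n * (‖M j l‖ / √2) := by
        rw [mul_comm √2, ← div_div]
        gcongr
        rw [div_le_iff₀ hD, mul_comm]
        exact hε.trans hnorm
    _ ≤ n * (I ^ (r : ℕ) * M j l).re := by gcongr
    _ = ∑ t, (I ^ (r : ℕ) * planeWave (k l - k j) (y t)).re := by
        rw [hM, one_apply_ne hjl, sub_zero, mul_left_comm, ← ofReal_inv,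
          re_ofReal_mul, ← mul_assoc, mul_inv_cancel₀ hn.ne', one_mul, Finset.mul_sum, re_sum]

end FourierMatrix

lemma bernstein_exponent_div_sqrt_two_mul {a ε : ℝ} (ha : 0 < a) (hε : 0 ≤ ε) (n : ℝ) :
    -(n * (ε / (√2 * a)) ^ 2) / (2 * (1 / 2 + ε / (√2 * a) / 3)) =
      -(n * ε ^ 2) / (2 * (a ^ 2 + √2 * a * ε / 3)) := by
  have h2 : √2 ^ 2 = 2 := Real.sq_sqrt zero_le_two
  field_simp
  linear_combination 3 * a * n * ε ^ 2 * h2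

/-- Deviation inequality for the random Fourier matrix (Corollary 3.2). -/
theorem fourier_matrix_deviation
    {Ω : Type*} [MeasurableSpace Ω] (μ : Measure Ω) [IsProbabilityMeasure μ]
    {n d D : ℕ} (hn : 0 < n) (hD : 2 ≤ D)
    (x : Fin n → Ω → (Fin d → ℝ))
    (hmeas : ∀ t, Measurable (x t))
    (hindep : iIndepFun x μ)
    (hunif : ∀ t, Measure.map (x t) μ =
      (volume : Measure (Fin d → ℝ)).restrict (Set.Icc 0 1))
    (k : Fin D → (Fin d → ℤ)) (hk : Function.Injective k)
    (U : Ω → Matrix (Fin n) (Fin D) ℂ)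
    (hU : ∀ ω t j, U ω t j =
      Complex.exp (2 * π * Complex.I * ∑ i, (k j i : ℂ) * (x t ω i : ℂ)))
    (ε : ℝ) (hε : 0 < ε) :
    μ {ω | ε ≤ ‖(n : ℂ)⁻¹ • ((U ω)ᴴ * U ω) - 1‖} ≤
      ENNReal.ofReal (4 * D * (D - 1) *
        Real.exp (-(n * ε ^ 2) /
          (2 * (((D : ℝ) - 1) ^ 2 + Real.sqrt 2 * ((D : ℝ) - 1) * ε / 3)))) := by
  have : NeZero n := ⟨hn.ne'⟩
  have : Nontrivial (Fin D) := Fin.nontrivial_iff_two_le.2 hD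
  have hD1 : (0 : ℝ) < D - 1 := by
    have : (2 : ℝ) ≤ D := by exact_mod_cast hD
    linarith
  set s := ε / (√2 * (D - 1))
  set β := Real.exp (-(n * ε ^ 2) /
    (2 * (((D : ℝ) - 1) ^ 2 + Real.sqrt 2 * ((D : ℝ) - 1) * ε / 3))) with hβ
  let E (p : Fin D × Fin D) (r : Fin 4) : Set Ω :=
    {ω | n * s ≤ ∑ t, (Complex.I ^ (r : ℕ) * planeWave (k p.2 - k p.1) (x t ω)).re}
  have hsub : {ω | ε ≤ ‖(n : ℂ)⁻¹ • ((U ω)ᴴ * U ω) - 1‖} ⊆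
      ⋃ p ∈ (Finset.univ.offDiag : Finset (Fin D × Fin D)), ⋃ r, E p r := fun ω hω => by
    simpa [E] using exists_le_sum_re_planeWave_of_le_l2_opNorm (hU ω) (by simpa using hω)
  have hE (p) (hp : p ∈ (Finset.univ.offDiag : Finset (Fin D × Fin D))) (r : Fin 4) :
      μ (E p r) ≤ ENNReal.ofReal β := by
    rw [hβ, ← bernstein_exponent_div_sqrt_two_mul hD1 hε.le]
    simpa only [Fintype.card_fin] using measure_sum_re_mul_planeWave_ge_le hindep
      (fun t => (hmeas t).aemeasurable) hunif
      (sub_ne_zero.2 (hk.ne (Finset.mem_offDiag.1 hp).2.2.symm)) (by simp)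
      (div_pos hε (by positivity))
  have hcard : 4 * (D : ℝ) * (D - 1) = ((D * D - D) * 4 : ℕ) := by
    rw [Nat.cast_mul, Nat.cast_sub (Nat.le_mul_self D)]; push_cast; ring
  calc μ {ω | ε ≤ ‖(n : ℂ)⁻¹ • ((U ω)ᴴ * U ω) - 1‖}
      ≤ ∑ p ∈ Finset.univ.offDiag, ∑ r, μ (E p r) :=
        (measure_mono hsub).trans <| (measure_biUnion_finset_le _ _).trans <|
          Finset.sum_le_sum fun p _ => measure_iUnion_fintype_le _ _
    _ ≤ ∑ p ∈ Finset.univ.offDiag, ∑ _r : Fin 4, ENNReal.ofReal β := by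
        gcongr with p hp r; exact hE p hp r
    _ = ENNReal.ofReal (4 * D * (D - 1) * β) := by
        rw [hcard, ENNReal.ofReal_mul (by positivity), ENNReal.ofReal_natCast]
        simp [Finset.offDiag_card, mul_assoc]
end

section
/- Define F_m(z) = ∑_{k=1}^{⌊m/2⌋} S₂(m,k) z^k where S₂(m,k) are the associated Stirling numbers of the second kind (counting partitions of an m-set into k blocks each of size ≥ 2), and G_m(z) = z^{−m} F_m(z). For all real κ > 0 and integers m ≥ 1 with 3m/κ < 1, G_{2m}(κ) ≤ (3m/κ)^m (1 − (3m/κ)^m)/(1 − 3m/κ). -/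
/-!
Writing `x = 3m/κ`, one has `G_{2m}(κ) = ∑_{k=1}^{m} S₂(2m,k) κ^{-(2m-k)}`. The recursion of the
associated Stirling numbers gives `S₂(n,k) ≤ (3n/2)^{n-k}` by induction, so each term is at most
`x^{2m-k}`, and the resulting sum `∑_{j=m}^{2m-1} x^j` is the geometric sum on the right.
-/

open Finset

/-- Associated Stirling numbers of the second kind: `assocStirling m k` counts
partitions of an `m`-element set into exactly `k` blocks, each of size at least 2. -/
def assocStirling : ℕ → ℕ → ℕ
  | 0, 0 => 1
  | 0, _ + 1 => 0
  | 1, _ => 0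
  | _ + 2, 0 => 0
  | n + 2, k + 1 => (k + 1) * assocStirling (n + 1) (k + 1) + (n + 1) * assocStirling n k

/-- `F_m(z) = ∑_{k=1}^{⌊m/2⌋} S₂(m,k) z^k`. -/
noncomputable def Fpoly (m : ℕ) (z : ℝ) : ℝ :=
  ∑ k ∈ Finset.Icc 1 (m / 2), (assocStirling m k : ℝ) * z ^ k

/-- `G_m(z) = z^{-m} F_m(z)`. -/
noncomputable def Gpoly (m : ℕ) (z : ℝ) : ℝ := z ^ (-(m : ℤ)) * Fpoly m z

theorem assocStirling_eq_zero_of_lt : ∀ {n k : ℕ}, n < 2 * k → assocStirling n k = 0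
  | 0, _ + 1, _ => rfl
  | 1, _ + 1, _ => rfl
  | n + 2, k + 1, h => by
    rw [assocStirling, assocStirling_eq_zero_of_lt (n := n + 1) (by omega),
      assocStirling_eq_zero_of_lt (n := n) (by omega)]
    simp

/-- The exponent `n - k` truncates, but the inequality holds for all `n, k`: when `n < 2k`
the left side vanishes. -/
theorem two_pow_mul_assocStirling_le : ∀ n k : ℕ,
    2 ^ (n - k) * assocStirling n k ≤ (3 * n) ^ (n - k)
  | 0, 0 => by simp [assocStirling]
  | 0, _ + 1 => by simp [assocStirling]
  | 1, _ => by simp [assocStirling]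
  | _ + 2, 0 => by simp [assocStirling]
  | n + 2, k + 1 => by
    by_cases hnk : n + 2 < 2 * (k + 1)
    · simp [assocStirling_eq_zero_of_lt hnk]
    have hexp : n + 2 - (k + 1) = n - k + 1 := by omega
    have ih₁ := two_pow_mul_assocStirling_le (n + 1) (k + 1)
    have ih₂ := two_pow_mul_assocStirling_le n k
    rw [show n + 1 - (k + 1) = n - k by omega] at ih₁
    set e := n - k
    have hpow₁ : (3 * (n + 1)) ^ e ≤ (3 * (n + 2)) ^ e := Nat.pow_le_pow_left (by omega) e
    have hpow₂ : (3 * n) ^ e ≤ (3 * (n + 2)) ^ e := Nat.pow_le_pow_left (by omega) e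
    rw [hexp, assocStirling]
    calc 2 ^ (e + 1) * ((k + 1) * assocStirling (n + 1) (k + 1) + (n + 1) * assocStirling n k)
        = (2 * (k + 1)) * (2 ^ e * assocStirling (n + 1) (k + 1))
          + (2 * (n + 1)) * (2 ^ e * assocStirling n k) := by ring
      _ ≤ (n + 2) * (3 * (n + 2)) ^ e + (2 * (n + 1)) * (3 * (n + 2)) ^ e := by
        gcongr
        · omega
        · exact ih₁.trans hpow₁
        · exact ih₂.trans hpow₂
      _ ≤ (3 * (n + 2)) ^ (e + 1) := by
        rw [pow_succ, ← add_mul, mul_comm]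
        gcongr
        omega

theorem assocStirling_two_mul_le (m k : ℕ) :
    assocStirling (2 * m) k ≤ (3 * m) ^ (2 * m - k) := by
  have h := two_pow_mul_assocStirling_le (2 * m) k
  rw [show 3 * (2 * m) = 2 * (3 * m) by ring, mul_pow] at h
  exact Nat.le_of_mul_le_mul_left h (by positivity)

theorem Gpoly_two_mul_eq {z : ℝ} (hz : z ≠ 0) (m : ℕ) :
    Gpoly (2 * m) z = ∑ k ∈ Icc 1 m, (assocStirling (2 * m) k : ℝ) * z⁻¹ ^ (2 * m - k) := by
  rw [Gpoly, Fpoly, Nat.mul_div_cancel_left m two_pos, mul_sum]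
  refine sum_congr rfl fun k hk => ?_
  have hk : k ≤ 2 * m := by simp only [mem_Icc] at hk; omega
  rw [mul_left_comm, ← zpow_natCast z k, ← zpow_add₀ hz, ← zpow_natCast, inv_zpow',
    Nat.cast_sub hk]
  push_cast
  ring_nf

theorem Gpoly_two_mul_le {z : ℝ} (hz : 0 < z) (m : ℕ) :
    Gpoly (2 * m) z ≤ ∑ k ∈ Icc 1 m, (3 * m / z) ^ (2 * m - k) := by
  rw [Gpoly_two_mul_eq hz.ne']
  refine sum_le_sum fun k _ => ?_
  rw [div_eq_mul_inv, mul_pow]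
  gcongr
  exact_mod_cast assocStirling_two_mul_le m k

theorem sum_Icc_pow_two_mul_sub {x : ℝ} (hx : x ≠ 1) (m : ℕ) :
    ∑ k ∈ Icc 1 m, x ^ (2 * m - k) = x ^ m * (1 - x ^ m) / (1 - x) := by
  rw [← Ico_add_one_right_eq_Icc, sum_Ico_reflect _ _ (by omega),
    show 2 * m + 1 - (m + 1) = m by omega, show 2 * m + 1 - 1 = 2 * m by omega,
    geom_sum_Ico' hx (by omega)]
  ring

theorem Gpoly_bound_general (κ : ℝ) (hκ : 0 < κ) (m : ℕ)
    (h3m : 3 * m / κ < 1) :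
    Gpoly (2 * m) κ ≤
      (3 * m / κ) ^ m * (1 - (3 * m / κ) ^ m) / (1 - 3 * m / κ) := by
  rw [← sum_Icc_pow_two_mul_sub h3m.ne]
  exact Gpoly_two_mul_le hκ m

theorem Gpoly_bound (κ : ℝ) (hκ : 0 < κ) (m : ℕ) (hm : 1 ≤ m)
    (h3m : 3 * m / κ < 1) :
    Gpoly (2 * m) κ ≤
      (3 * m / κ) ^ m * (1 - (3 * m / κ) ^ m) / (1 - 3 * m / κ) :=
  Gpoly_bound_general κ hκ m h3m
end
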